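/- arXiv:1710.11120 — 2 statements merged into one kernel-verified Lean document; each statement's English description precedes it below -/
import Mathlib

section
/- Let P be an n×n real symmetric positive semidefinite matrix, W' an l×l real symmetric positive definite matrix, C an l×n real matrix, and p a real number. Then the matrix p²·C P Cᵀ + W' is invertible, and the gain K* = p · P Cᵀ (p²·C P Cᵀ + W')⁻¹ is the unique minimizer over all n×l real matrices K of the cost f(K) = trace( (I − p·K C) P (I − p·K C)ᵀ + K W' Kᵀ ); that is, f(K*) ≤ f(K) for every K, with equality only when K = K*. -/
/-!
Write `S = p² C P Cᵀ + W'`, which is positive definite because `W'` is. The gain `K*` solves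
the normal equation `K* S = p P Cᵀ`, and completing the square in the Joseph form gives
`f(K) = f(K*) + trace((K - K*) S (K - K*)ᵀ)`. The trace of `Δ S Δᵀ` is nonnegative, and it
vanishes only when `Δ S Δᵀ = 0`, whose diagonal entries are the quadratic forms of `S` at the
rows of `Δ`; so `Δ = 0`.
-/

open Matrix

/-- The optimal Kalman-type gain for the linear optimal estimator over a cognitive
radio link: `K* = p • P Cᵀ (p² • C P Cᵀ + W')⁻¹`. -/
noncomputable def crOptimalGain {n l : ℕ} (P : Matrix (Fin n) (Fin n) ℝ)
    (W' : Matrix (Fin l) (Fin l) ℝ) (C : Matrix (Fin l) (Fin n) ℝ) (p : ℝ) :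
    Matrix (Fin n) (Fin l) ℝ :=
  p • (P * Cᵀ * (p ^ 2 • (C * P * Cᵀ) + W')⁻¹)

namespace Matrix

section CompleteSquare

variable {R : Type*} [CommRing R] {n l : Type*} [Fintype n] [Fintype l] [DecidableEq n]
  (P : Matrix n n R) (W' : Matrix l l R) (C : Matrix l n R) (p : R)

theorem joseph_eq (K : Matrix n l R) :
    (1 - p • (K * C)) * P * (1 - p • (K * C))ᵀ + K * W' * Kᵀ
      = P - p • (K * C * P) - p • (P * Cᵀ * Kᵀ) + K * (p ^ 2 • (C * P * Cᵀ) + W') * Kᵀ := by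
  simp only [transpose_sub, transpose_one, transpose_smul, transpose_mul, Matrix.sub_mul,
    Matrix.mul_sub, Matrix.mul_add, Matrix.add_mul, Matrix.smul_mul, Matrix.mul_smul,
    Matrix.one_mul, Matrix.mul_one, smul_sub, smul_smul, Matrix.mul_assoc, pow_two]
  abel

variable {P W'} in
theorem joseph_eq_add_of_mul_eq (hP : Pᵀ = P) (hW' : W'ᵀ = W') {K₀ : Matrix n l R}
    (hK₀ : K₀ * (p ^ 2 • (C * P * Cᵀ) + W') = p • (P * Cᵀ)) (K : Matrix n l R) :
    (1 - p • (K * C)) * P * (1 - p • (K * C))ᵀ + K * W' * Kᵀ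
      = (1 - p • (K₀ * C)) * P * (1 - p • (K₀ * C))ᵀ + K₀ * W' * K₀ᵀ
        + (K - K₀) * (p ^ 2 • (C * P * Cᵀ) + W') * (K - K₀)ᵀ := by
  set S := p ^ 2 • (C * P * Cᵀ) + W'
  have hS : Sᵀ = S := by
    simp only [S, transpose_add, transpose_smul, transpose_mul, transpose_transpose, hP, hW',
      Matrix.mul_assoc]
  have hK₀t : S * K₀ᵀ = p • (C * P) := by
    simpa [hS, hP, Matrix.mul_assoc] using congrArg transpose hK₀
  have hleft (K : Matrix n l R) : p • (K * C * P) = K * S * K₀ᵀ := by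
    rw [Matrix.mul_assoc K S, hK₀t, Matrix.mul_smul, Matrix.mul_assoc]
  have hright (K : Matrix n l R) : p • (P * Cᵀ * Kᵀ) = K₀ * S * Kᵀ := by
    rw [hK₀, Matrix.smul_mul]
  rw [joseph_eq, joseph_eq, hleft, hleft, hright, hright]
  simp only [Matrix.sub_mul, Matrix.mul_sub, transpose_sub]
  abel

end CompleteSquare

theorem mul_mul_conjTranspose_apply_self {R : Type*} [NonUnitalSemiring R] [StarRing R]
    {m n : Type*} [Fintype n] (S : Matrix n n R) (Δ : Matrix m n R) (i : m) :
    (Δ * S * Δᴴ) i i = Δ i ⬝ᵥ S *ᵥ star (Δ i) := by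
  rw [dotProduct_mulVec, mul_apply', ← mul_apply']
  rfl

section PosDef

open scoped ComplexOrder

variable {𝕜 : Type*} [RCLike 𝕜] {m n : Type*} [Fintype n]

theorem PosDef.mul_mul_conjTranspose_eq_zero_iff {S : Matrix n n 𝕜} (hS : S.PosDef)
    {Δ : Matrix m n 𝕜} : Δ * S * Δᴴ = 0 ↔ Δ = 0 := by
  refine ⟨fun h => ?_, fun h => by simp [h]⟩
  ext i j
  by_contra hne
  have hrow : star (Δ i) ≠ 0 := fun h0 => hne (by simpa using congrFun (star_eq_zero.mp h0) j)
  have hpos := hS.dotProduct_mulVec_pos hrow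
  rw [star_star, ← mul_mul_conjTranspose_apply_self, h, zero_apply] at hpos
  exact hpos.false

theorem PosDef.trace_mul_mul_conjTranspose_eq_zero_iff [Fintype m] {S : Matrix n n 𝕜}
    (hS : S.PosDef) {Δ : Matrix m n 𝕜} : (Δ * S * Δᴴ).trace = 0 ↔ Δ = 0 := by
  rw [(hS.posSemidef.mul_mul_conjTranspose_same Δ).trace_eq_zero_iff,
    hS.mul_mul_conjTranspose_eq_zero_iff]

end PosDef

end Matrix

theorem posDef_sq_smul_mul_mul_transpose_add {m n : Type*} [Fintype m] [Fintype n]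
    {P : Matrix n n ℝ} (hP : P.PosSemidef) {W' : Matrix m m ℝ} (hW : W'.PosDef)
    (C : Matrix m n ℝ) (p : ℝ) : (p ^ 2 • (C * P * Cᵀ) + W').PosDef :=
  PosDef.posSemidef_add ((hP.mul_mul_conjTranspose_same C).smul (sq_nonneg p)) hW

theorem crOptimalGain_mul {n l : ℕ} (P : Matrix (Fin n) (Fin n) ℝ)
    (W' : Matrix (Fin l) (Fin l) ℝ) (C : Matrix (Fin l) (Fin n) ℝ) (p : ℝ)
    (h : IsUnit (p ^ 2 • (C * P * Cᵀ) + W')) :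
    crOptimalGain P W' C p * (p ^ 2 • (C * P * Cᵀ) + W') = p • (P * Cᵀ) := by
  rw [crOptimalGain, Matrix.smul_mul, Matrix.mul_assoc,
    nonsing_inv_mul _ ((isUnit_iff_isUnit_det _).mp h), Matrix.mul_one]

/-- With `P` symmetric positive semidefinite (the a priori error covariance), `W'`
symmetric positive definite (the modified measurement-noise covariance), `C` the
measurement matrix and `p = P(s_t = 1 | s_r = 1)`, the matrix `p² • C P Cᵀ + W'` is
invertible and the gain `K* = p • P Cᵀ (p² • C P Cᵀ + W')⁻¹` is the unique minimizer of
the Joseph-form trace cost `K ↦ trace((I - p•K C) P (I - p•K C)ᵀ + K W' Kᵀ)`. -/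
theorem crOptimalGain_isUnit_and_unique_minimizer {n l : ℕ}
    (P : Matrix (Fin n) (Fin n) ℝ) (hP : P.PosSemidef)
    (W' : Matrix (Fin l) (Fin l) ℝ) (hW : W'.PosDef)
    (C : Matrix (Fin l) (Fin n) ℝ) (p : ℝ) :
    IsUnit (p ^ 2 • (C * P * Cᵀ) + W') ∧
      ∀ K : Matrix (Fin n) (Fin l) ℝ,
        ((1 - p • (crOptimalGain P W' C p * C)) * P *
              (1 - p • (crOptimalGain P W' C p * C))ᵀ +
            crOptimalGain P W' C p * W' * (crOptimalGain P W' C p)ᵀ).trace ≤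
          ((1 - p • (K * C)) * P * (1 - p • (K * C))ᵀ + K * W' * Kᵀ).trace ∧
        (((1 - p • (K * C)) * P * (1 - p • (K * C))ᵀ + K * W' * Kᵀ).trace =
            ((1 - p • (crOptimalGain P W' C p * C)) * P *
                  (1 - p • (crOptimalGain P W' C p * C))ᵀ +
                crOptimalGain P W' C p * W' * (crOptimalGain P W' C p)ᵀ).trace →
          K = crOptimalGain P W' C p) := by
  have hS := posDef_sq_smul_mul_mul_transpose_add hP hW C p
  have hPt : Pᵀ = P := (isHermitian_iff_isSymm.mp hP.isHermitian).eq
  have hWt : W'ᵀ = W' := (isHermitian_iff_isSymm.mp hW.isHermitian).eq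
  refine ⟨hS.isUnit, fun K => ?_⟩
  rw [joseph_eq_add_of_mul_eq C p hPt hWt (crOptimalGain_mul P W' C p hS.isUnit) K,
    trace_add _ ((K - _) * _ * _)]
  set K₀ := crOptimalGain P W' C p
  have hrem := (hS.posSemidef.mul_mul_conjTranspose_same (K - K₀)).trace_nonneg
  rw [conjTranspose_eq_transpose_of_trivial] at hrem
  refine ⟨le_add_of_nonneg_right hrem, fun h => sub_eq_zero.mp ?_⟩
  refine hS.trace_mul_mul_conjTranspose_eq_zero_iff.mp ?_
  rw [conjTranspose_eq_transpose_of_trivial]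
  linarith
end

section
/- Let e : Ω → ℝⁿ and v : Ω → ℝᵐ be square-integrable random vectors and s : Ω → {0,1} a random variable, mutually independent, with E[e eᵀ] = P, E[v] = 0, E[v vᵀ] = V, and E[s] = p. Let A (n×n) and B (n×m) be real matrices and u ∈ ℝᵐ a deterministic vector, and define e' = A e + (s − p)·B u + s·B v. Then E[e' e'ᵀ] = A P Aᵀ + p(1 − p)·B u uᵀ Bᵀ + p·B V Bᵀ. -/
/-!
Write `e' = A e + B w` with `w = (s - p) u + s v`. Since `(e, v)` is independent of `s`, `e` is
independent of `v` and `E v = 0`, the cross moment `E[e wᵀ]` vanishes, so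
`E[e' e'ᵀ] = A P Aᵀ + B E[w wᵀ] Bᵀ`. In `E[w wᵀ]` independence of `v` and `s` factors every term
into a moment of `s` times a moment of `v`; the mixed terms die because `E v = 0`, leaving
`E[(s - p)²] u uᵀ + E[s²] V`, and `s ∈ {0, 1}` gives `E[s²] = p` and `E[(s - p)²] = p (1 - p)`.
-/

open MeasureTheory ProbabilityTheory Matrix
open scoped ENNReal

section CrossMoment

variable {Ω ι κ : Type*} [MeasurableSpace Ω] {μ : Measure Ω}

noncomputable def crossMoment (μ : Measure Ω) (f : Ω → ι → ℝ) (g : Ω → κ → ℝ) :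
    Matrix ι κ ℝ :=
  Matrix.of fun i j => ∫ ω, f ω i * g ω j ∂μ

@[simp]
theorem crossMoment_apply (f : Ω → ι → ℝ) (g : Ω → κ → ℝ) (i : ι) (j : κ) :
    crossMoment μ f g i j = ∫ ω, f ω i * g ω j ∂μ :=
  rfl

theorem transpose_crossMoment (f : Ω → ι → ℝ) (g : Ω → κ → ℝ) :
    (crossMoment μ f g)ᵀ = crossMoment μ g f := by
  ext i j
  simp only [transpose_apply, crossMoment_apply, mul_comm]

theorem crossMoment_smul_left (a : Ω → ℝ) (f : Ω → ι → ℝ) (g : Ω → κ → ℝ) :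
    crossMoment μ (fun ω => a ω • f ω) g = crossMoment μ f (fun ω => a ω • g ω) := by
  ext i j
  simp only [crossMoment_apply, Pi.smul_apply, smul_eq_mul, mul_left_comm, mul_assoc]

theorem crossMoment_const_left_eq_zero (u : ι → ℝ) {g : Ω → κ → ℝ}
    (hg : ∀ j, ∫ ω, g ω j ∂μ = 0) : crossMoment μ (fun _ => u) g = 0 := by
  ext i j
  rw [crossMoment_apply, integral_const_mul, hg, mul_zero, Matrix.zero_apply]

theorem crossMoment_eq_zero_of_indepFun {f : Ω → ι → ℝ} {g : Ω → κ → ℝ} (h : IndepFun f g μ)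
    (hf : AEMeasurable f μ) (hg : AEMeasurable g μ) (hg0 : ∀ j, ∫ ω, g ω j ∂μ = 0) :
    crossMoment μ f g = 0 := by
  ext i j
  have hi := measurable_pi_apply (X := fun _ : ι => ℝ) i
  have hj := measurable_pi_apply (X := fun _ : κ => ℝ) j
  exact ((h.comp hi hj).integral_fun_mul_eq_mul_integral
    (hi.comp_aemeasurable hf).aestronglyMeasurable
    (hj.comp_aemeasurable hg).aestronglyMeasurable).trans (mul_eq_zero_of_right _ (hg0 j))

theorem crossMoment_smul_right_of_indepFun {f : Ω → ι → ℝ} {g : Ω → κ → ℝ} {b : Ω → ℝ}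
    (h : IndepFun (fun ω => (f ω, g ω)) b μ) (hf : AEMeasurable f μ) (hg : AEMeasurable g μ)
    (hb : AEMeasurable b μ) :
    crossMoment μ f (fun ω => b ω • g ω) = (∫ ω, b ω ∂μ) • crossMoment μ f g := by
  ext i j
  have hφ : Measurable fun x : (ι → ℝ) × (κ → ℝ) => x.1 i * x.2 j := by fun_prop
  have hfactor := (h.comp hφ measurable_id).integral_fun_mul_eq_mul_integral
    (hφ.comp_aemeasurable (hf.prodMk hg)).aestronglyMeasurable hb.aestronglyMeasurable
  calc ∫ ω, f ω i * (b ω • g ω) j ∂μ = ∫ ω, f ω i * g ω j * b ω ∂μ := by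
        congr 1 with ω
        simp only [Pi.smul_apply, smul_eq_mul]
        ring
    _ = (∫ ω, b ω ∂μ) * ∫ ω, f ω i * g ω j ∂μ := hfactor.trans (mul_comm _ _)

section Fintype

variable [Fintype ι] [Fintype κ]

theorem MeasureTheory.MemLp.integrable_eval_mul_eval {f : Ω → ι → ℝ} {g : Ω → κ → ℝ}
    (hf : MemLp f 2 μ) (hg : MemLp g 2 μ) (i : ι) (j : κ) :
    Integrable (fun ω => f ω i * g ω j) μ :=
  (hf.eval i).integrable_mul (hg.eval j)

theorem MeasureTheory.MemLp.mulVec {ι' : Type*} [Fintype ι'] {f : Ω → ι → ℝ} {p : ℝ≥0∞}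
    (hf : MemLp f p μ) (A : Matrix ι' ι ℝ) : MemLp (fun ω => A *ᵥ f ω) p μ :=
  (Matrix.mulVecLin A).toContinuousLinearMap.comp_memLp' hf

theorem crossMoment_add_left {f g : Ω → ι → ℝ} {k : Ω → κ → ℝ} (hf : MemLp f 2 μ)
    (hg : MemLp g 2 μ) (hk : MemLp k 2 μ) :
    crossMoment μ (fun ω => f ω + g ω) k = crossMoment μ f k + crossMoment μ g k := by
  ext i j
  simp only [crossMoment_apply, Pi.add_apply, add_mul, Matrix.add_apply]
  exact integral_add (hf.integrable_eval_mul_eval hk i j) (hg.integrable_eval_mul_eval hk i j)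

theorem crossMoment_add_right {f g : Ω → ι → ℝ} {k : Ω → κ → ℝ} (hf : MemLp f 2 μ)
    (hg : MemLp g 2 μ) (hk : MemLp k 2 μ) :
    crossMoment μ k (fun ω => f ω + g ω) = crossMoment μ k f + crossMoment μ k g := by
  rw [← transpose_crossMoment, crossMoment_add_left hf hg hk, transpose_add,
    transpose_crossMoment, transpose_crossMoment]

theorem crossMoment_add_add_of_crossMoment_eq_zero {f g : Ω → ι → ℝ} (hf : MemLp f 2 μ)
    (hg : MemLp g 2 μ) (h : crossMoment μ f g = 0) :
    crossMoment μ (fun ω => f ω + g ω) (fun ω => f ω + g ω) =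
      crossMoment μ f f + crossMoment μ g g := by
  have h' : crossMoment μ g f = 0 := by rw [← transpose_crossMoment, h, transpose_zero]
  rw [crossMoment_add_left (k := fun ω => f ω + g ω) hf hg (hf.add hg),
    crossMoment_add_right hf hg hf, crossMoment_add_right hf hg hg, h, h', add_zero, zero_add]

theorem crossMoment_mulVec_mulVec {ι' κ' : Type*} {f : Ω → ι → ℝ} {g : Ω → κ → ℝ}
    (hf : MemLp f 2 μ) (hg : MemLp g 2 μ) (A : Matrix ι' ι ℝ) (B : Matrix κ' κ ℝ) :
    crossMoment μ (fun ω => A *ᵥ f ω) (fun ω => B *ᵥ g ω) = A * crossMoment μ f g * Bᵀ := by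
  ext i j
  have hexpand : ∀ ω, (A *ᵥ f ω) i * (B *ᵥ g ω) j =
      ∑ k, ∑ l, A i k * B j l * (f ω k * g ω l) := by
    intro ω
    simp only [mulVec, dotProduct, Finset.sum_mul_sum]
    exact Finset.sum_congr rfl fun k _ => Finset.sum_congr rfl fun l _ => by ring
  have hint : ∀ k l, Integrable (fun ω => A i k * B j l * (f ω k * g ω l)) μ :=
    fun k l => (hf.integrable_eval_mul_eval hg k l).const_mul _
  simp only [crossMoment_apply, hexpand]
  rw [integral_finsetSum _ fun k _ => integrable_finsetSum _ fun l _ => hint k l]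
  simp only [integral_finsetSum _ fun l _ => hint _ l, integral_const_mul, mul_apply,
    transpose_apply, crossMoment_apply, Finset.sum_mul]
  rw [Finset.sum_comm]
  exact Finset.sum_congr rfl fun l _ => Finset.sum_congr rfl fun k _ => by ring

end Fintype

/-- The input `s • (u + v)` that actually reaches the plant, minus its prediction `p • u`. -/
def inputPredictionError (s : Ω → ℝ) (p : ℝ) (u : κ → ℝ) (v : Ω → κ → ℝ) : Ω → κ → ℝ :=
  fun ω => (s ω - p) • u + s ω • v ω

section InputPredictionError

variable [Fintype ι] [Fintype κ] {f : Ω → ι → ℝ} {v : Ω → κ → ℝ} {s : Ω → ℝ} {p : ℝ}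
  (u : κ → ℝ)

theorem memLp_sub_smul_const [IsFiniteMeasure μ] (hs : MemLp s ∞ μ) :
    MemLp (fun ω => (s ω - p) • u) 2 μ :=
  (memLp_const (p := 2) u).smul (hs.sub (memLp_const p))

theorem memLp_inputPredictionError [IsFiniteMeasure μ] (hs : MemLp s ∞ μ) (hv : MemLp v 2 μ) :
    MemLp (inputPredictionError s p u v) 2 μ :=
  (memLp_sub_smul_const u hs).add (hv.smul hs)

theorem crossMoment_inputPredictionError_eq_zero [IsProbabilityMeasure μ] (hf : MemLp f 2 μ)
    (hv : MemLp v 2 μ) (hs : MemLp s ∞ μ) (hfv : IndepFun f v μ)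
    (hfvs : IndepFun (fun ω => (f ω, v ω)) s μ) (hv0 : ∀ j, ∫ ω, v ω j ∂μ = 0)
    (hp : ∫ ω, s ω ∂μ = p) :
    crossMoment μ f (inputPredictionError s p u v) = 0 := by
  have hs_centered : ∫ ω, (s ω - p) ∂μ = 0 := by
    rw [integral_sub (hs.integrable le_top) (integrable_const p), hp, integral_const,
      probReal_univ, one_smul, sub_self]
  have h_u : crossMoment μ f (fun ω => (s ω - p) • u) = 0 := by
    rw [crossMoment_smul_right_of_indepFun (g := fun _ => u) (b := fun ω => s ω - p)
      (hfvs.comp (φ := fun x => (x.1, u)) (ψ := fun t => t - p) (by fun_prop) (by fun_prop))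
      hf.aemeasurable aemeasurable_const (hs.aemeasurable.sub_const p), hs_centered, zero_smul]
  have h_v : crossMoment μ f (fun ω => s ω • v ω) = 0 := by
    rw [crossMoment_smul_right_of_indepFun hfvs hf.aemeasurable hv.aemeasurable hs.aemeasurable,
      crossMoment_eq_zero_of_indepFun hfv hf.aemeasurable hv.aemeasurable hv0, smul_zero]
  have hsv : MemLp (fun ω => s ω • v ω) 2 μ := hv.smul hs
  unfold inputPredictionError
  rw [crossMoment_add_right (memLp_sub_smul_const u hs) hsv hf, h_u, h_v, add_zero]

theorem crossMoment_inputPredictionError_self [IsFiniteMeasure μ] (hv : MemLp v 2 μ)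
    (hs : MemLp s ∞ μ) (hvs : IndepFun v s μ) (hv0 : ∀ j, ∫ ω, v ω j ∂μ = 0) :
    crossMoment μ (inputPredictionError s p u v) (inputPredictionError s p u v) =
      (∫ ω, (s ω - p) * (s ω - p) ∂μ) • vecMulVec u u +
        (∫ ω, s ω * s ω ∂μ) • crossMoment μ v v := by
  have hsu : MemLp (fun ω => (s ω - p) • u) 2 μ := memLp_sub_smul_const u hs
  have hsv : MemLp (fun ω => s ω • v ω) 2 μ := hv.smul hs
  have h_uu : crossMoment μ (fun ω => (s ω - p) • u) (fun ω => (s ω - p) • u) =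
      (∫ ω, (s ω - p) * (s ω - p) ∂μ) • vecMulVec u u := by
    ext i j
    simp only [crossMoment_apply, Pi.smul_apply, smul_eq_mul, Matrix.smul_apply, vecMulVec_apply]
    rw [← integral_mul_const]
    congr 1 with ω
    ring
  have h_uv : crossMoment μ (fun ω => (s ω - p) • u) (fun ω => s ω • v ω) = 0 := by
    rw [crossMoment_smul_left]
    simp only [smul_smul]
    rw [crossMoment_smul_right_of_indepFun (b := fun ω => (s ω - p) * s ω)
      (hvs.comp (φ := fun x => (u, x)) (ψ := fun t => (t - p) * t) (by fun_prop) (by fun_prop))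
      aemeasurable_const hv.aemeasurable ((hs.aemeasurable.sub_const p).mul hs.aemeasurable),
      crossMoment_const_left_eq_zero u hv0, smul_zero]
  have h_vv : crossMoment μ (fun ω => s ω • v ω) (fun ω => s ω • v ω) =
      (∫ ω, s ω * s ω ∂μ) • crossMoment μ v v := by
    rw [crossMoment_smul_left]
    simp only [smul_smul]
    exact crossMoment_smul_right_of_indepFun
      (hvs.comp (φ := fun x => (x, x)) (ψ := fun t => t * t) (by fun_prop) (by fun_prop))
      hv.aemeasurable hv.aemeasurable (hs.aemeasurable.mul hs.aemeasurable)
  have hw : MemLp (fun ω => (s ω - p) • u + s ω • v ω) 2 μ := hsu.add hsv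
  unfold inputPredictionError
  rw [crossMoment_add_left hsu hsv hw, crossMoment_add_right hsu hsv hsu,
    crossMoment_add_right hsu hsv hsv,
    ← transpose_crossMoment (fun ω => (s ω - p) • u) (fun ω => s ω • v ω), h_uu, h_uv, h_vv,
    transpose_zero, add_zero, zero_add]

end InputPredictionError

theorem integral_mul_self_of_eq_zero_or_eq_one {s : Ω → ℝ} (hs : ∀ ω, s ω = 0 ∨ s ω = 1) :
    ∫ ω, s ω * s ω ∂μ = ∫ ω, s ω ∂μ := by
  congr 1 with ω
  rcases hs ω with h | h <;> simp [h]

theorem integral_sub_mul_sub_of_eq_zero_or_eq_one [IsProbabilityMeasure μ] {s : Ω → ℝ} {p : ℝ}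
    (hs : ∀ ω, s ω = 0 ∨ s ω = 1) (hint : Integrable s μ) (hp : ∫ ω, s ω ∂μ = p) :
    ∫ ω, (s ω - p) * (s ω - p) ∂μ = p * (1 - p) := by
  have hsq : ∀ ω, (s ω - p) * (s ω - p) = (1 - 2 * p) * s ω + p ^ 2 := by
    intro ω
    rcases hs ω with h | h <;> simp [h] <;> ring
  simp only [hsq]
  rw [integral_add (hint.const_mul _) (integrable_const _), integral_const_mul, integral_const,
    hp, probReal_univ, one_smul]
  ring

end CrossMoment

theorem prediction_error_covariance_general
    {Ωs : Type*} [MeasurableSpace Ωs] (μ : Measure Ωs) [IsProbabilityMeasure μ]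
    {n m : ℕ} (e : Ωs → Fin n → ℝ) (v : Ωs → Fin m → ℝ) (s : Ωs → ℝ)
    (P : Matrix (Fin n) (Fin n) ℝ) (V : Matrix (Fin m) (Fin m) ℝ)
    (A : Matrix (Fin n) (Fin n) ℝ) (B : Matrix (Fin n) (Fin m) ℝ)
    (u : Fin m → ℝ) (p : ℝ)
    (hsmeas : Measurable s)
    (he2 : ∀ i, MemLp (fun a => e a i) 2 μ)
    (hv2 : ∀ i, MemLp (fun a => v a i) 2 μ)
    (hs01 : ∀ a, s a = 0 ∨ s a = 1)
    (hP : ∀ i j, ∫ a, e a i * e a j ∂μ = P i j)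
    (hvmean : ∀ i, ∫ a, v a i ∂μ = 0)
    (hV : ∀ i j, ∫ a, v a i * v a j ∂μ = V i j)
    (hsp : ∫ a, s a ∂μ = p)
    (hindep_ev : IndepFun e v μ)
    (hindep_ev_s : IndepFun (fun a => (e a, v a)) s μ)
    (e' : Ωs → Fin n → ℝ)
    (he' : ∀ a, e' a =
      A.mulVec (e a) + (s a - p) • B.mulVec u + s a • B.mulVec (v a)) :
    ∀ i j, ∫ a, e' a i * e' a j ∂μ =
      (A * P * Aᵀ + (p * (1 - p)) • (B * Matrix.vecMulVec u u * Bᵀ) +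
        p • (B * V * Bᵀ)) i j := by
  have he : MemLp e 2 μ := memLp_pi_iff.2 he2
  have hv : MemLp v 2 μ := memLp_pi_iff.2 hv2
  have hs : MemLp s ∞ μ := memLp_top_of_bound hsmeas.aestronglyMeasurable 1
    (ae_of_all _ fun a => by rcases hs01 a with h | h <;> simp [h])
  set w := inputPredictionError s p u v with hw_def
  have hw : MemLp w 2 μ := memLp_inputPredictionError u hs hv
  have he'_eq : e' = fun a => A *ᵥ e a + B *ᵥ w a := by
    funext a
    rw [he', hw_def, inputPredictionError, mulVec_add, mulVec_smul, mulVec_smul, add_assoc]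
  have hcross : crossMoment μ (fun a => A *ᵥ e a) (fun a => B *ᵥ w a) = 0 := by
    rw [crossMoment_mulVec_mulVec he hw, crossMoment_inputPredictionError_eq_zero u he hv hs
      hindep_ev hindep_ev_s hvmean hsp, Matrix.mul_zero, Matrix.zero_mul]
  have hP' : crossMoment μ e e = P := Matrix.ext hP
  have hV' : crossMoment μ v v = V := Matrix.ext hV
  have hcov : crossMoment μ e' e' =
      A * P * Aᵀ + B * ((p * (1 - p)) • vecMulVec u u + p • V) * Bᵀ := by
    rw [he'_eq, crossMoment_add_add_of_crossMoment_eq_zero (he.mulVec A) (hw.mulVec B) hcross,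
      crossMoment_mulVec_mulVec he he, crossMoment_mulVec_mulVec hw hw,
      crossMoment_inputPredictionError_self u hv hs (hindep_ev_s.comp measurable_snd measurable_id)
        hvmean, integral_sub_mul_sub_of_eq_zero_or_eq_one hs01 (hs.integrable le_top) hsp,
      integral_mul_self_of_eq_zero_or_eq_one hs01, hsp, hP', hV']
  intro i j
  rw [← crossMoment_apply, hcov, Matrix.mul_add, Matrix.add_mul, Matrix.mul_smul,
    Matrix.smul_mul, Matrix.mul_smul, Matrix.smul_mul, add_assoc]

/-- One-step prediction-error covariance over a cognitive radio link: with `e`, `v`, `s`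
mutually independent, `E[e eᵀ] = P`, `E[v] = 0`, `E[v vᵀ] = V`, `s ∈ {0,1}` with mean
`p`, and deterministic control `u`, the error `e' = A e + (s - p)•B u + s•B v` satisfies
`E[e' e'ᵀ] = A P Aᵀ + p(1-p)•B u uᵀ Bᵀ + p•B V Bᵀ`. -/
theorem prediction_error_covariance
    {Ωs : Type*} [MeasurableSpace Ωs] (μ : Measure Ωs) [IsProbabilityMeasure μ]
    {n m : ℕ} (e : Ωs → Fin n → ℝ) (v : Ωs → Fin m → ℝ) (s : Ωs → ℝ)
    (P : Matrix (Fin n) (Fin n) ℝ) (V : Matrix (Fin m) (Fin m) ℝ)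
    (A : Matrix (Fin n) (Fin n) ℝ) (B : Matrix (Fin n) (Fin m) ℝ)
    (u : Fin m → ℝ) (p : ℝ)
    (hemeas : ∀ i, Measurable fun a => e a i)
    (hvmeas : ∀ i, Measurable fun a => v a i)
    (hsmeas : Measurable s)
    (he2 : ∀ i, MemLp (fun a => e a i) 2 μ)
    (hv2 : ∀ i, MemLp (fun a => v a i) 2 μ)
    (hs01 : ∀ a, s a = 0 ∨ s a = 1)
    (hP : ∀ i j, ∫ a, e a i * e a j ∂μ = P i j)
    (hvmean : ∀ i, ∫ a, v a i ∂μ = 0)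
    (hV : ∀ i j, ∫ a, v a i * v a j ∂μ = V i j)
    (hsp : ∫ a, s a ∂μ = p)
    (hindep_ev : IndepFun e v μ)
    (hindep_ev_s : IndepFun (fun a => (e a, v a)) s μ)
    (e' : Ωs → Fin n → ℝ)
    (he' : ∀ a, e' a =
      A.mulVec (e a) + (s a - p) • B.mulVec u + s a • B.mulVec (v a)) :
    ∀ i j, ∫ a, e' a i * e' a j ∂μ =
      (A * P * Aᵀ + (p * (1 - p)) • (B * Matrix.vecMulVec u u * Bᵀ) +
        p • (B * V * Bᵀ)) i j :=
  prediction_error_covariance_general μ e v s P V A B u p hsmeas he2 hv2 hs01 hP hvmean hV hsp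
    hindep_ev hindep_ev_s e' he'
end
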